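/- Let P be a polyomino and I_P ⊂ S = K[x_v : v ∈ V(P)] its polyomino ideal (generated by all inner 2-minors). If each variable x_v is a non-zerodivisor modulo I_P, then the height of I_P is at most the number of cells of P. -/

import Mathlib

open MvPolynomial

/-- A cell of `ℕ²` is identified with its lower-left corner `a`; it is the
interval `[a, a+(1,1)]`. -/
abbrev Cell := ℕ × ℕ

/-- Two cells are adjacent if they share an edge. -/
def CellAdj (c d : Cell) : Prop :=
  (c.1 = d.1 ∧ (c.2 + 1 = d.2 ∨ d.2 + 1 = c.2)) ∨
  (c.2 = d.2 ∧ (c.1 + 1 = d.1 ∨ d.1 + 1 = c.1))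

/-- A polyomino: a nonempty finite collection of cells, any two of which are
connected by a path of edge-adjacent cells inside the collection. -/
def IsPolyomino (P : Finset Cell) : Prop :=
  P.Nonempty ∧ ∀ c ∈ P, ∀ d ∈ P,
    Relation.ReflTransGen (fun x y => x ∈ P ∧ y ∈ P ∧ CellAdj x y) c d

/-- The four vertices of the cell with lower-left corner `c`. -/
def cellVertices (c : Cell) : Finset (ℕ × ℕ) :=
  {c, (c.1 + 1, c.2), (c.1, c.2 + 1), (c.1 + 1, c.2 + 1)}

/-- The vertex set `V(P)` of a collection of cells. -/
def vertexSet (P : Finset Cell) : Finset (ℕ × ℕ) :=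
  P.biUnion cellVertices

/-- `[(i1,j1),(i2,j2)]` is an inner interval of `P`: it is a proper interval and
every cell contained in it belongs to `P`. -/
def IsInnerInterval (P : Finset Cell) (i1 j1 i2 j2 : ℕ) : Prop :=
  i1 < i2 ∧ j1 < j2 ∧ ∀ i j : ℕ, i1 ≤ i → i < i2 → j1 ≤ j → j < j2 → (i, j) ∈ P

/-- The set of inner 2-minors of `P` in `S = K[x_v : v ∈ V(P)]`. -/
def innerMinors (K : Type*) [Field K] (P : Finset Cell) :
    Set (MvPolynomial {v : ℕ × ℕ // v ∈ vertexSet P} K) :=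
  { f | ∃ i1 j1 i2 j2, IsInnerInterval P i1 j1 i2 j2 ∧
      ∃ (ha : (i1, j1) ∈ vertexSet P) (hb : (i2, j2) ∈ vertexSet P)
        (hc : (i1, j2) ∈ vertexSet P) (hd : (i2, j1) ∈ vertexSet P),
        f = X ⟨(i1, j1), ha⟩ * X ⟨(i2, j2), hb⟩ - X ⟨(i1, j2), hc⟩ * X ⟨(i2, j1), hd⟩ }

/-- The 2-minors corresponding to the cells of `P`. -/
def cellMinors (K : Type*) [Field K] (P : Finset Cell) :
    Set (MvPolynomial {v : ℕ × ℕ // v ∈ vertexSet P} K) :=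
  { f | ∃ c ∈ P,
      ∃ (ha : (c.1, c.2) ∈ vertexSet P) (hb : (c.1 + 1, c.2 + 1) ∈ vertexSet P)
        (hc : (c.1, c.2 + 1) ∈ vertexSet P) (hd : (c.1 + 1, c.2) ∈ vertexSet P),
        f = X ⟨(c.1, c.2), ha⟩ * X ⟨(c.1 + 1, c.2 + 1), hb⟩
          - X ⟨(c.1, c.2 + 1), hc⟩ * X ⟨(c.1 + 1, c.2), hd⟩ }

/-- The (Krull) height of an ideal: the infimum of the heights of the primes
containing it, in the prime spectrum ordered by inclusion. -/
noncomputable def idealHeight {R : Type*} [CommRing R] (I : Ideal R) : ℕ∞ :=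
  ⨅ (p : PrimeSpectrum R) (_ : I ≤ p.asIdeal), Order.height p

/-!
Let `p` be a minimal prime of `I_P`. Elements of minimal primes are zero divisors, so `p`
contains no variable. Writing `M(s, t)` for the minor of the interval `[s, t] × [j₁, j₂]`,
for `s < m < t` one has `x_{(m,j₁)} M(s, t) = x_{(s,j₁)} M(m, t) + x_{(t,j₁)} M(s, m)`; so a
prime containing no variable and the minors of two adjacent intervals contains the minor of
their union. Hence a prime containing the `|P|` cell minors and no variable contains `I_P`,
`p` is minimal over the ideal of cell minors, and Krull's height theorem gives
`height p ≤ |P|`.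
-/

section MinimalPrimes

variable {R : Type*} [CommRing R]

lemma notMem_of_mem_minimalPrimes_of_mk_mem_nonZeroDivisors {I p : Ideal R}
    (hp : p ∈ I.minimalPrimes) {x : R}
    (hx : Ideal.Quotient.mk I x ∈ nonZeroDivisors (R ⧸ I)) : x ∉ p := by
  rw [Ideal.minimalPrimes_eq_comap] at hp
  obtain ⟨q, hq, rfl⟩ := hp
  exact fun hxq => notMem_nonZeroDivisors_of_mem_mem_minimalPrimes (Ideal.mem_comap.mp hxq) hq hx

lemma mem_minimalPrimes_of_le {I J p : Ideal R} (hp : p ∈ I.minimalPrimes) (hJI : J ≤ I)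
    (h : ∀ t : Ideal R, t.IsPrime → J ≤ t → t ≤ p → I ≤ t) : p ∈ J.minimalPrimes :=
  ⟨⟨hp.isPrime, hJI.trans hp.1.2⟩, fun t ⟨ht, hJt⟩ htp => hp.2 ⟨ht, h t ht hJt htp⟩ htp⟩

lemma idealHeight_le_height {I p : Ideal R} [p.IsPrime] (h : I ≤ p) :
    idealHeight I ≤ p.height := by
  rw [PrimeSpectrum.height_eq_orderHeight ⟨p, ‹_›⟩]
  exact iInf₂_le (⟨p, ‹_›⟩ : PrimeSpectrum R) h

end MinimalPrimes

section RectMinor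

variable {R : Type*} [CommRing R]

def rectMinor (x : ℕ × ℕ → R) (i1 j1 i2 j2 : ℕ) : R :=
  x (i1, j1) * x (i2, j2) - x (i1, j2) * x (i2, j1)

lemma rectMinor_swap (x : ℕ × ℕ → R) (i1 j1 i2 j2 : ℕ) :
    rectMinor (x ∘ Prod.swap) j1 i1 j2 i2 = rectMinor x i1 j1 i2 j2 := by
  simp only [rectMinor, Function.comp_apply, Prod.swap_prod_mk]
  ring

lemma rectMinor_mem_of_split {q : Ideal R} [q.IsPrime] {x : ℕ × ℕ → R} {i1 im i2 j1 j2 : ℕ}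
    (h₁ : rectMinor x i1 j1 im j2 ∈ q) (h₂ : rectMinor x im j1 i2 j2 ∈ q)
    (hx : x (im, j1) ∉ q) : rectMinor x i1 j1 i2 j2 ∈ q := by
  have key : x (im, j1) * rectMinor x i1 j1 i2 j2 =
      x (i1, j1) * rectMinor x im j1 i2 j2 + x (i2, j1) * rectMinor x i1 j1 im j2 := by
    simp only [rectMinor]
    ring
  have hmem : x (im, j1) * rectMinor x i1 j1 i2 j2 ∈ q := by
    rw [key]
    exact q.add_mem (q.mul_mem_left _ h₂) (q.mul_mem_left _ h₁)
  exact (Ideal.IsPrime.mem_or_mem ‹_› hmem).resolve_left hx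

lemma rectMinor_mem_of_forall_column {q : Ideal R} [q.IsPrime] {x : ℕ × ℕ → R}
    {i1 i2 j1 j2 : ℕ} (hi : i1 < i2)
    (hcol : ∀ i, i1 ≤ i → i < i2 → rectMinor x i j1 (i + 1) j2 ∈ q)
    (hx : ∀ i, i1 < i → i < i2 → x (i, j1) ∉ q) : rectMinor x i1 j1 i2 j2 ∈ q := by
  induction i2, hi using Nat.le_induction with
  | base => exact hcol i1 le_rfl (Nat.lt_succ_self _)
  | succ i2 hi ih =>
    refine rectMinor_mem_of_split (im := i2) ?_ (hcol i2 (by omega) (Nat.lt_succ_self _))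
      (hx i2 hi (Nat.lt_succ_self _))
    exact ih (fun i h₁ h₂ => hcol i h₁ (by omega)) (fun i h₁ h₂ => hx i h₁ (by omega))

lemma rectMinor_mem_of_forall_row {q : Ideal R} [q.IsPrime] {x : ℕ × ℕ → R}
    {i1 i2 j1 j2 : ℕ} (hj : j1 < j2)
    (hrow : ∀ j, j1 ≤ j → j < j2 → rectMinor x i1 j i2 (j + 1) ∈ q)
    (hx : ∀ j, j1 < j → j < j2 → x (i1, j) ∉ q) : rectMinor x i1 j1 i2 j2 ∈ q := by
  rw [← rectMinor_swap]
  refine rectMinor_mem_of_forall_column hj (fun j h₁ h₂ => ?_) hx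
  rw [rectMinor_swap]
  exact hrow j h₁ h₂

theorem rectMinor_mem_of_forall_cell {q : Ideal R} [q.IsPrime] {x : ℕ × ℕ → R}
    {i1 i2 j1 j2 : ℕ} (hi : i1 < i2) (hj : j1 < j2)
    (hcell : ∀ i j, i1 ≤ i → i < i2 → j1 ≤ j → j < j2 → rectMinor x i j (i + 1) (j + 1) ∈ q)
    (hx : ∀ i j, i1 ≤ i → i ≤ i2 → j1 ≤ j → j ≤ j2 → x (i, j) ∉ q) :
    rectMinor x i1 j1 i2 j2 ∈ q := by
  refine rectMinor_mem_of_forall_column hi (fun i h₁ h₂ => ?_)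
    (fun i h₁ h₂ => hx i j1 h₁.le h₂.le le_rfl hj.le)
  exact rectMinor_mem_of_forall_row hj (fun j h₃ h₄ => hcell i j h₁ h₂ h₃ h₄)
    (fun j h₃ h₄ => hx i j h₁ h₂.le h₃.le h₄.le)

end RectMinor

section Polyomino

variable (K : Type*) [Field K] (P : Finset Cell)

/-- Extending `x_v` by `0` outside `V(P)` lets minors be written without membership proofs. -/
noncomputable def vertexVar (v : ℕ × ℕ) : MvPolynomial {v : ℕ × ℕ // v ∈ vertexSet P} K :=
  if h : v ∈ vertexSet P then X ⟨v, h⟩ else 0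

variable {K P}

lemma vertexVar_of_mem {v : ℕ × ℕ} (h : v ∈ vertexSet P) : vertexVar K P v = X ⟨v, h⟩ :=
  dif_pos h

lemma rectMinor_vertexVar {i1 j1 i2 j2 : ℕ} (ha : (i1, j1) ∈ vertexSet P)
    (hb : (i2, j2) ∈ vertexSet P) (hc : (i1, j2) ∈ vertexSet P) (hd : (i2, j1) ∈ vertexSet P) :
    rectMinor (vertexVar K P) i1 j1 i2 j2 =
      X ⟨(i1, j1), ha⟩ * X ⟨(i2, j2), hb⟩ - X ⟨(i1, j2), hc⟩ * X ⟨(i2, j1), hd⟩ := by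
  simp only [rectMinor, vertexVar_of_mem ha, vertexVar_of_mem hb, vertexVar_of_mem hc,
    vertexVar_of_mem hd]

lemma constantCoeff_vertexVar (v : ℕ × ℕ) : constantCoeff (vertexVar K P v) = 0 := by
  unfold vertexVar
  split_ifs <;> simp

lemma mem_vertexSet_of_isInnerInterval {i1 j1 i2 j2 : ℕ} (h : IsInnerInterval P i1 j1 i2 j2)
    {i j : ℕ} (h₁ : i1 ≤ i) (h₂ : i ≤ i2) (h₃ : j1 ≤ j) (h₄ : j ≤ j2) : (i, j) ∈ vertexSet P := by
  obtain ⟨hi, hj, hcells⟩ := h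
  -- `(i, j)` is a vertex of the cell of the interval nearest to it
  refine Finset.mem_biUnion.mpr ⟨(min i (i2 - 1), min j (j2 - 1)),
    hcells _ _ (by omega) (by omega) (by omega) (by omega), ?_⟩
  simp only [cellVertices, Finset.mem_insert, Finset.mem_singleton, Prod.mk.injEq]
  omega

lemma isInnerInterval_cell {c : Cell} (hc : c ∈ P) :
    IsInnerInterval P c.1 c.2 (c.1 + 1) (c.2 + 1) := by
  refine ⟨Nat.lt_succ_self _, Nat.lt_succ_self _, fun i j h₁ h₂ h₃ h₄ => ?_⟩
  obtain rfl : i = c.1 := by omega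
  obtain rfl : j = c.2 := by omega
  exact hc

lemma innerMinors_eq : innerMinors K P =
    {f | ∃ i1 j1 i2 j2, IsInnerInterval P i1 j1 i2 j2 ∧
      f = rectMinor (vertexVar K P) i1 j1 i2 j2} := by
  ext f
  constructor
  · rintro ⟨i1, j1, i2, j2, h, ha, hb, hc, hd, rfl⟩
    exact ⟨i1, j1, i2, j2, h, (rectMinor_vertexVar ha hb hc hd).symm⟩
  · rintro ⟨i1, j1, i2, j2, h, rfl⟩
    have hi := h.1.le
    have hj := h.2.1.le
    have ha := mem_vertexSet_of_isInnerInterval h le_rfl hi le_rfl hj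
    have hb := mem_vertexSet_of_isInnerInterval h hi le_rfl hj le_rfl
    have hc := mem_vertexSet_of_isInnerInterval h le_rfl hi hj le_rfl
    have hd := mem_vertexSet_of_isInnerInterval h hi le_rfl le_rfl hj
    exact ⟨i1, j1, i2, j2, h, ha, hb, hc, hd, rectMinor_vertexVar ha hb hc hd⟩

lemma cellMinors_eq_image : cellMinors K P =
    (fun c : Cell => rectMinor (vertexVar K P) c.1 c.2 (c.1 + 1) (c.2 + 1)) '' P := by
  ext f
  constructor
  · rintro ⟨c, hc, ha, hb, hc', hd, rfl⟩
    exact ⟨c, hc, rectMinor_vertexVar ha hb hc' hd⟩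
  · rintro ⟨c, hc, rfl⟩
    have h := isInnerInterval_cell hc
    have ha := mem_vertexSet_of_isInnerInterval h le_rfl (by omega) le_rfl (by omega)
    have hb := mem_vertexSet_of_isInnerInterval h (by omega) le_rfl (by omega) le_rfl
    have hc' := mem_vertexSet_of_isInnerInterval h le_rfl (by omega) (by omega) le_rfl
    have hd := mem_vertexSet_of_isInnerInterval h (by omega) le_rfl le_rfl (by omega)
    exact ⟨c, hc, ha, hb, hc', hd, rectMinor_vertexVar ha hb hc' hd⟩

lemma cellMinors_subset_innerMinors : cellMinors K P ⊆ innerMinors K P := by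
  rw [cellMinors_eq_image, innerMinors_eq]
  rintro _ ⟨c, hc, rfl⟩
  exact ⟨_, _, _, _, isInnerInterval_cell hc, rfl⟩

lemma span_innerMinors_ne_top : Ideal.span (innerMinors K P) ≠ ⊤ := by
  refine ne_top_of_le_ne_top (RingHom.ker_ne_top constantCoeff) ?_
  rw [Ideal.span_le, innerMinors_eq]
  rintro _ ⟨i1, j1, i2, j2, -, rfl⟩
  simp [rectMinor, constantCoeff_vertexVar]

theorem innerMinors_subset_of_isPrime {q : Ideal (MvPolynomial {v // v ∈ vertexSet P} K)}
    [q.IsPrime] (hcell : cellMinors K P ⊆ q) (hX : ∀ v, X v ∉ q) :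
    innerMinors K P ⊆ q := by
  rw [innerMinors_eq]
  rintro _ ⟨i1, j1, i2, j2, h, rfl⟩
  refine rectMinor_mem_of_forall_cell h.1 h.2.1 (fun i j h₁ h₂ h₃ h₄ => ?_)
    (fun i j h₁ h₂ h₃ h₄ => ?_)
  · rw [cellMinors_eq_image] at hcell
    exact hcell ⟨(i, j), h.2.2 i j h₁ h₂ h₃ h₄, rfl⟩
  · rw [vertexVar_of_mem (mem_vertexSet_of_isInnerInterval h h₁ h₂ h₃ h₄)]
    exact hX _

end Polyomino

theorem stmt_9_general {K : Type*} [Field K] (P : Finset Cell)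
    (hnzd : ∀ v : {v : ℕ × ℕ // v ∈ vertexSet P},
      Ideal.Quotient.mk (Ideal.span (innerMinors K P)) (X v) ∈
        nonZeroDivisors (MvPolynomial {v : ℕ × ℕ // v ∈ vertexSet P} K ⧸
          Ideal.span (innerMinors K P))) :
    idealHeight (Ideal.span (innerMinors K P)) ≤ P.card := by
  obtain ⟨p, hp⟩ := Ideal.nonempty_minimalPrimes (span_innerMinors_ne_top (K := K) (P := P))
  have := hp.isPrime
  have hX : ∀ v, X v ∉ p := fun v =>
    notMem_of_mem_minimalPrimes_of_mk_mem_nonZeroDivisors hp (hnzd v)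
  have hpcell : p ∈ (Ideal.span (cellMinors K P)).minimalPrimes :=
    mem_minimalPrimes_of_le hp (Ideal.span_mono cellMinors_subset_innerMinors)
      fun t _ hJt htp => Ideal.span_le.mpr <|
        innerMinors_subset_of_isPrime (Ideal.span_le.mp hJt) fun v hv => hX v (htp hv)
  rw [cellMinors_eq_image] at hpcell
  calc idealHeight (Ideal.span (innerMinors K P))
      ≤ p.height := idealHeight_le_height hp.1.2
    _ ≤ _ := Ideal.height_le_card_of_mem_minimalPrimes_span (P.finite_toSet.image _) hpcell
    _ ≤ P.card := by
      exact_mod_cast (Set.ncard_image_le P.finite_toSet).trans (Set.ncard_coe_finset P).le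

/-- If every variable `x_v` is a non-zerodivisor modulo the polyomino ideal `I_P`,
then `height I_P ≤ |P|`. -/
theorem stmt_9 {K : Type*} [Field K] (P : Finset Cell) (hP : IsPolyomino P)
    (hnzd : ∀ v : {v : ℕ × ℕ // v ∈ vertexSet P},
      Ideal.Quotient.mk (Ideal.span (innerMinors K P)) (X v) ∈
        nonZeroDivisors (MvPolynomial {v : ℕ × ℕ // v ∈ vertexSet P} K ⧸
          Ideal.span (innerMinors K P))) :
    idealHeight (Ideal.span (innerMinors K P)) ≤ P.card :=
  stmt_9_general P hnzd
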